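/- Let X be a finite connected pre-ordered set, R a 2-torsion free commutative ring with unity, and L a Lie triple derivation of I(X,R) with coefficients C^{ij}_{xy}. Then C^{ii}_{xx} = C^{ii}_{ii} for all i, x ∈ X; equivalently, the diagonal part of L(e_{ii}) is a scalar multiple of the identity δ. -/

import Mathlib

open IncidenceAlgebra
open scoped Classical

variable {R X : Type*}

/-- The matrix unit `e_{x y}` of the incidence algebra (zero if `¬ x ≤ y`). -/
noncomputable def matrixUnit [CommRing R] [Preorder X] [DecidableEq X] (x y : X) :
    IncidenceAlgebra R X :=
  ⟨fun u v => if u = x ∧ v = y ∧ x ≤ y then 1 else 0, fun a b hab => by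
    split_ifs with h
    · exact absurd (by rw [h.1, h.2.1]; exact h.2.2) hab
    · rfl⟩

/-- The Lie bracket `[f,g] = fg - gf`. -/
def lieBr {A : Type*} [Ring A] (f g : A) : A := f * g - g * f

/-- `L` is a Lie triple derivation of the incidence algebra. -/
def IsLieTripleDer [CommRing R] [Preorder X] [DecidableEq X] [LocallyFiniteOrder X]
    (L : IncidenceAlgebra R X →ₗ[R] IncidenceAlgebra R X) : Prop :=
  ∀ f g h : IncidenceAlgebra R X,
    L (lieBr (lieBr f g) h) =
      lieBr (lieBr (L f) g) h + lieBr (lieBr f (L g)) h + lieBr (lieBr f g) (L h)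

/-- `X` is connected: any two points are joined by a chain of comparabilities. -/
def OrdConnected' (X : Type*) [Preorder X] : Prop :=
  ∀ x y : X, Relation.ReflTransGen (fun a b : X => a ≤ b ∨ b ≤ a) x y

/-- `R` is 2-torsion free. -/
def TwoTorsionFree (R : Type*) [CommRing R] : Prop := ∀ r : R, r + r = 0 → r = 0

/-! Write `D_i = L (e_ii)`. For `x < y`, every bracket with `e_ii` multiplies the `(x, y)`-entry
by `c = [i = y] - [i = x]`, and `[[e_xx, e_xy], e_ii] = c • e_xy`; so the `(x, y)`-entry of the Lie
triple identity for `(e_xx, e_xy, e_ii)` reads `D_i(x,x) - D_i(y,y) = c · (D_x(x,x) - D_x(y,y))`.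
For `i = x` we have `c = -1`, so 2-torsion freeness gives `D_x(x,x) = D_x(y,y)`, and then
`D_i(x,x) = D_i(y,y)` for every `i`. Connectedness propagates this along chains of comparabilities. -/

section MatrixUnit

variable [CommRing R] [Preorder X] [DecidableEq X]

lemma matrixUnit_apply (x y u v : X) :
    (matrixUnit x y : IncidenceAlgebra R X) u v = if u = x ∧ v = y ∧ x ≤ y then 1 else 0 := rfl

variable [LocallyFiniteOrder X]

lemma mul_matrixUnit_apply (f : IncidenceAlgebra R X) (x y u v : X) :
    (f * matrixUnit x y : IncidenceAlgebra R X) u v = if v = y ∧ x ≤ y then f u x else 0 := by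
  rw [mul_apply]
  split_ifs with h
  · obtain ⟨rfl, hxy⟩ := h
    rw [Finset.sum_eq_single x (fun c _ hc => by simp [matrixUnit_apply, hc]) fun hx => ?_]
    · simp [matrixUnit_apply, hxy]
    · rw [apply_eq_zero_of_not_le fun hux => hx (Finset.mem_Icc.2 ⟨hux, hxy⟩), zero_mul]
  · exact Finset.sum_eq_zero fun c _ => by
      rw [matrixUnit_apply, if_neg fun hc => h ⟨hc.2.1, hc.2.2⟩, mul_zero]

lemma matrixUnit_mul_apply (f : IncidenceAlgebra R X) (x y u v : X) :
    (matrixUnit x y * f : IncidenceAlgebra R X) u v = if u = x ∧ x ≤ y then f y v else 0 := by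
  rw [mul_apply]
  split_ifs with h
  · obtain ⟨rfl, hxy⟩ := h
    rw [Finset.sum_eq_single y (fun c _ hc => by simp [matrixUnit_apply, hc]) fun hy => ?_]
    · simp [matrixUnit_apply, hxy]
    · rw [apply_eq_zero_of_not_le fun hyv => hy (Finset.mem_Icc.2 ⟨hxy, hyv⟩), mul_zero]
  · exact Finset.sum_eq_zero fun c _ => by
      rw [matrixUnit_apply, if_neg fun hc => h ⟨hc.1, hc.2.2⟩, zero_mul]

lemma matrixUnit_mul_matrixUnit (a b c d : X) :
    (matrixUnit a b * matrixUnit c d : IncidenceAlgebra R X) =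
      if b = c ∧ a ≤ b ∧ c ≤ d then matrixUnit a d else 0 := by
  split_ifs with h
  · obtain ⟨rfl, hab, hbd⟩ := h
    ext u v
    rw [mul_matrixUnit_apply, matrixUnit_apply, matrixUnit_apply]
    simp only [hab, hbd, hab.trans hbd, and_true]
    split_ifs <;> tauto
  · ext u v
    rw [mul_matrixUnit_apply, matrixUnit_apply, IncidenceAlgebra.zero_apply]
    split_ifs <;> tauto

lemma lieBr_matrixUnit_self_apply (f : IncidenceAlgebra R X) (i x y : X) :
    lieBr f (matrixUnit i i) x y = f x y * (matrixUnit i i y y - matrixUnit i i x x) := by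
  simp only [lieBr, IncidenceAlgebra.sub_apply, mul_matrixUnit_apply, matrixUnit_mul_apply,
    matrixUnit_apply, le_refl, and_true]
  split_ifs <;> simp_all

lemma lieBr_matrixUnit_matrixUnit_self (i x y : X) :
    lieBr (matrixUnit x y) (matrixUnit i i) =
      (matrixUnit i i y y - matrixUnit i i x x : R) • (matrixUnit x y : IncidenceAlgebra R X) := by
  ext u v
  rw [lieBr_matrixUnit_self_apply, constSMul_apply, smul_eq_mul, matrixUnit_apply]
  split_ifs with h
  · obtain ⟨rfl, rfl, -⟩ := h
    ring
  · ring

variable {L : IncidenceAlgebra R X →ₗ[R] IncidenceAlgebra R X}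

theorem IsLieTripleDer.diag_sub_diag_eq_mul (hL : IsLieTripleDer L) {x y : X} (hxy : x ≤ y)
    (hne : x ≠ y) (i : X) :
    L (matrixUnit i i) x x - L (matrixUnit i i) y y =
      (matrixUnit i i y y - matrixUnit i i x x) *
        (L (matrixUnit x x) x x - L (matrixUnit x x) y y) := by
  have h := congrArg (fun f : IncidenceAlgebra R X => f x y)
    (hL (matrixUnit x x) (matrixUnit x y) (matrixUnit i i))
  have hbr : lieBr (matrixUnit x x) (matrixUnit x y) = (matrixUnit x y : IncidenceAlgebra R X) := by
    rw [lieBr, matrixUnit_mul_matrixUnit, matrixUnit_mul_matrixUnit,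
      if_pos ⟨rfl, le_rfl, hxy⟩, if_neg fun h => hne h.1.symm, sub_zero]
  simp only [hbr, lieBr_matrixUnit_matrixUnit_self, map_smul, constSMul_apply, smul_eq_mul,
    lieBr_matrixUnit_self_apply, IncidenceAlgebra.add_apply] at h
  simp only [lieBr, IncidenceAlgebra.sub_apply, mul_matrixUnit_apply, matrixUnit_mul_apply, hxy,
    hne.symm, le_refl, and_true, if_true, if_false] at h
  linear_combination h

theorem IsLieTripleDer.diag_eq_diag_of_le (hL : IsLieTripleDer L) (htf : TwoTorsionFree R)
    {x y : X} (hxy : x ≤ y) (i : X) :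
    L (matrixUnit i i) x x = L (matrixUnit i i) y y := by
  rcases eq_or_ne x y with rfl | hne
  · rfl
  have hx : L (matrixUnit x x) x x = L (matrixUnit x x) y y := by
    have h := hL.diag_sub_diag_eq_mul hxy hne x
    simp only [matrixUnit_apply, hne.symm, le_refl, and_self, false_and, if_true, if_false] at h
    exact sub_eq_zero.1 (htf _ (by linear_combination h))
  have h := hL.diag_sub_diag_eq_mul hxy hne i
  rwa [hx, sub_self, mul_zero, sub_eq_zero] at h

end MatrixUnit

theorem OrdConnected'.eq_of_forall_le {α : Type*} [Preorder X] (hconn : OrdConnected' X)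
    {f : X → α} (hf : ∀ a b : X, a ≤ b → f a = f b) (x y : X) : f x = f y :=
  Relation.reflTransGen_le_of_equivalence_of_le (Setoid.ker f).iseqv
    (fun a b hab => hab.elim (hf a b) fun hba => (hf b a hba).symm) x y (hconn x y)

theorem lieTripleDer_rel_R4_general [CommRing R] [Preorder X] [DecidableEq X]
    [LocallyFiniteOrder X]
    (htf : TwoTorsionFree R) (hconn : OrdConnected' X)
    (L : IncidenceAlgebra R X →ₗ[R] IncidenceAlgebra R X) (hL : IsLieTripleDer L) :
    ∀ i x : X, L (matrixUnit i i) x x = L (matrixUnit i i) i i := fun i x =>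
  hconn.eq_of_forall_le (fun _ _ hab => hL.diag_eq_diag_of_le htf hab i) x i

/-- relation (R4). `C^{ii}_{xx} = C^{ii}_{ii}` for all `i, x`. -/
theorem lieTripleDer_rel_R4 [CommRing R] [Preorder X] [DecidableEq X]
    [Fintype X] [LocallyFiniteOrder X]
    (htf : TwoTorsionFree R) (hconn : OrdConnected' X)
    (L : IncidenceAlgebra R X →ₗ[R] IncidenceAlgebra R X) (hL : IsLieTripleDer L) :
    ∀ i x : X, L (matrixUnit i i) x x = L (matrixUnit i i) i i :=
  lieTripleDer_rel_R4_general htf hconn L hL
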